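/- (Key pointwise estimates in the blow-up) There exists ε₀ ∈ (0,1/2] such that for every ε ∈ (0,ε₀], every n ≥ 0 and every I ∈ 𝒟^n the following holds. Write a = a_{I₀} = (1,0), D_I = α_{n+1} (sin γ_{n+1}) ⟨a, a_{I₊}⟩ and F_I = β_{n+1} (cos γ_{n+1}) ⟨a, b_{I₊}⟩. Then ⟨a, W_{I₊} b_I⟩ = D_I + F_I, the angle between a and a_{I₊} is at most ε/(1-ε), and: D_I ≥ ε^{n+1}/8, |F_I| ≤ β_{n+1} ≤ ε^{2n+4}, and D_I ≥ 2|F_I|; consequently ⟨a, W_{I₊} b_I⟩ ≥ ε^{n+1}/16. -/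

import Mathlib

open MeasureTheory Set
open scoped ENNReal Matrix Pointwise Classical

noncomputable section

/-- The unit interval `I₀ = [0,1)`. -/
def I0 : Set ℝ := Set.Ico (0 : ℝ) 1

/-- The dyadic interval `[k/2^n, (k+1)/2^n)`. -/
def dyad (n k : ℕ) : Set ℝ := Set.Ico ((k : ℝ) / 2 ^ n) (((k : ℝ) + 1) / 2 ^ n)

/-- Real `d × d` matrices. -/
abbrev Mat (d : ℕ) := Matrix (Fin d) (Fin d) ℝ

/-- The Euclidean norm `|v|_{ℝ^d}`. -/
def enorm2 {d : ℕ} (v : Fin d → ℝ) : ℝ := Real.sqrt (∑ i, v i ^ 2)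

/-- The Euclidean inner product `⟨v, w⟩_{ℝ^d}`. -/
def dotp {d : ℕ} (v w : Fin d → ℝ) : ℝ := ∑ i, v i * w i

open scoped Classical in
/-- The positive semidefinite square root of a positive semidefinite matrix
(junk value `0` if the matrix is not positive semidefinite). -/
def matSqrt {d : ℕ} (A : Mat d) : Mat d := if h : A.PosSemidef then
    h.1.eigenvectorUnitary.1 * Matrix.diagonal ((↑) ∘ (√·) ∘ h.1.eigenvalues) *
      (star h.1.eigenvectorUnitary : Mat d) else 0

/-- Order in the sense of quadratic forms: `A ⩽ B` iff `B - A` is positive semidefinite. -/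
def matLE {d : ℕ} (A B : Mat d) : Prop := (B - A).PosSemidef

/-- The average `⟨g⟩_I = |I|⁻¹ ∫_I g` of a (scalar- or vector-valued) function. -/
def avgOn {E : Type*} [NormedAddCommGroup E] [NormedSpace ℝ E] (I : Set ℝ) (g : ℝ → E) : E :=
  (volume I).toReal⁻¹ • ∫ x in I, g x

/-- The entrywise average `⟨W⟩_I` of a matrix-valued function. -/
def avgMat {d : ℕ} (I : Set ℝ) (W : ℝ → Mat d) : Mat d :=
  Matrix.of fun i j => avgOn I fun x => W x i j

/-- A matrix weight on `I₀`: an integrable function with symmetric values,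
positive definite a.e. on `I₀`. -/
structure IsMatrixWeight (d : ℕ) (W : ℝ → Mat d) : Prop where
  intOn : ∀ i j, IntegrableOn (fun x => W x i j) I0
  symm : ∀ x, (W x).IsSymm
  posdef : ∀ᵐ x ∂(volume.restrict I0), (W x).PosDef

/-- Membership in `L²_W(ℝ^d)`. -/
def MemL2W {d : ℕ} (W : ℝ → Mat d) (f : ℝ → Fin d → ℝ) : Prop :=
  Measurable f ∧ IntegrableOn (fun x => dotp (W x *ᵥ f x) (f x)) I0

/-- The squared norm `‖f‖²_{L²_W} = ∫_{I₀} ⟨W(x) f(x), f(x)⟩ dx`. -/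
def l2normSq {d : ℕ} (W : ℝ → Mat d) (f : ℝ → Fin d → ℝ) : ℝ :=
  ∫ x in I0, dotp (W x *ᵥ f x) (f x)

/-- The average `⟨φ W f⟩_I = |I|⁻¹ ∫_I φ(y) W(y) f(y) dy`. -/
def avgPhiWf {d : ℕ} (I : Set ℝ) (φ : ℝ → ℝ) (W : ℝ → Mat d) (f : ℝ → Fin d → ℝ) :
    Fin d → ℝ :=
  avgOn I fun y => φ y • (W y *ᵥ f y)

/-- Admissible functions `φ : I → [-1,1]`, measurable. -/
def Adm (I : Set ℝ) (φ : ℝ → ℝ) : Prop :=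
  Measurable φ ∧ ∀ y ∈ I, φ y ∈ Set.Icc (-1 : ℝ) 1

/-- The eigenvalue `α_n = 1/(1+ε^{2n+2})`. -/
def alphaC (ε : ℝ) (n : ℕ) : ℝ := 1 / (1 + ε ^ (2 * n + 2))

/-- The eigenvalue `β_n = ε^{2n+2}/(1+ε^{2n+2})`. -/
def betaC (ε : ℝ) (n : ℕ) : ℝ := ε ^ (2 * n + 2) / (1 + ε ^ (2 * n + 2))

/-- The rotation parameter `δ_n = (ε^{2n}(1-ε²)/(1-ε^{4n+2}))^{1/2}`. -/
def deltaC (ε : ℝ) (n : ℕ) : ℝ :=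
  Real.sqrt (ε ^ (2 * n) * (1 - ε ^ 2) / (1 - ε ^ (4 * n + 2)))

/-- The rotation angle `γ_n = arctan δ_n`. -/
def gammaC (ε : ℝ) (n : ℕ) : ℝ := Real.arctan (deltaC ε n)

/-- The orthonormal pairs `(a_I, b_I)` indexed by dyadic intervals `I = dyad n k`:
`a_{I₀} = (1,0)`, `b_{I₀} = (0,1)`, and for `I ∈ 𝒟^n`,
`a_{I±} = (cos γ_{n+1}) a_I ± (sin γ_{n+1}) b_I`,
`b_{I±} = (cos γ_{n+1}) b_I ∓ (sin γ_{n+1}) a_I`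
(the right child of `dyad n k` is `dyad (n+1) (2k+1)`, the left one `dyad (n+1) (2k)`). -/
def abC (ε : ℝ) : ℕ → ℕ → (Fin 2 → ℝ) × (Fin 2 → ℝ)
  | 0, _ => (![1, 0], ![0, 1])
  | n + 1, k =>
    let p := abC ε n (k / 2)
    let γ := gammaC ε (n + 1)
    if k % 2 = 1 then
      (Real.cos γ • p.1 + Real.sin γ • p.2, Real.cos γ • p.2 - Real.sin γ • p.1)
    else
      (Real.cos γ • p.1 - Real.sin γ • p.2, Real.cos γ • p.2 + Real.sin γ • p.1)

/-- The eigenvector `a_I` for `I = dyad n k`. -/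
def aC (ε : ℝ) (n k : ℕ) : Fin 2 → ℝ := (abC ε n k).1

/-- The eigenvector `b_I` for `I = dyad n k`. -/
def bC (ε : ℝ) (n k : ℕ) : Fin 2 → ℝ := (abC ε n k).2

/-- The average `W_I = α_n a_I a_Iᵀ + β_n b_I b_Iᵀ` for `I = dyad n k`. -/
def WC (ε : ℝ) (n k : ℕ) : Mat 2 :=
  alphaC ε n • Matrix.vecMulVec (aC ε n k) (aC ε n k) +
    betaC ε n • Matrix.vecMulVec (bC ε n k) (bC ε n k)

/-- The Carleson matrices `A_I = |I| ε^{-2(n+1)} b_I b_Iᵀ` for `I = dyad n k`. -/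
def AC (ε : ℝ) (n k : ℕ) : Mat 2 :=
  (((2 : ℝ) ^ n)⁻¹ * ((ε ^ (n + 1))⁻¹) ^ 2) • Matrix.vecMulVec (bC ε n k) (bC ε n k)

/-!
Every frame `(a_I, b_I)` is the standard basis rotated through some angle `θ_I`, and
`|θ_I| ≤ ∑ γ_m ≤ ∑ δ_m ≤ ∑ ε^m ≤ ε/(1-ε)`. Undoing the last rotation gives
`b_I = cos γ_{n+1} b_{I₊} + sin γ_{n+1} a_{I₊}`; as `a_{I₊}, b_{I₊}` are orthonormal eigenvectors
of `W_{I₊}`, this yields `W_{I₊} b_I = α_{n+1} sin γ_{n+1} a_{I₊} + β_{n+1} cos γ_{n+1} b_{I₊}`,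
hence `⟨a, W_{I₊} b_I⟩ = D_I + F_I`. For `ε ≤ 1/4` the factors of `D_I` satisfy `α_{n+1} ≥ 1/2`,
`sin γ_{n+1} ≥ ε^{n+1}/2` (from `δ_{n+1} ≥ (3/4) ε^{n+1}`) and `cos θ_{I₊} ≥ 1/2`, while
`|F_I| ≤ β_{n+1} ≤ ε^{2n+4} ≤ ε^{n+1}/16`.
-/

open Real Finset

lemma arctan_le_self_of_nonneg {x : ℝ} (hx : 0 ≤ x) : arctan x ≤ x :=
  calc arctan x ≤ tan (arctan x) := le_tan (arctan_nonneg.2 hx) (arctan_lt_pi_div_two x)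
    _ = x := tan_arctan x

lemma half_le_cos_of_abs_le_one {θ : ℝ} (hθ : |θ| ≤ 1) : 1 / 2 ≤ cos θ := by
  have hθ2 : θ ^ 2 ≤ 1 := by nlinarith [sq_abs θ, abs_nonneg θ]
  linarith [one_sub_sq_div_two_le_cos (x := θ)]

lemma abs_mul_cos_mul_le {β γ t : ℝ} (hβ : 0 ≤ β) (ht : |t| ≤ 1) : |β * cos γ * t| ≤ β :=
  calc |β * cos γ * t| = β * (|cos γ| * |t|) := by rw [abs_mul, abs_mul, abs_of_nonneg hβ, mul_assoc]
    _ ≤ β * 1 := by gcongr; exact mul_le_one₀ (abs_cos_le_one γ) (abs_nonneg t) ht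
    _ = β := mul_one β

lemma mulVec_smul_add_smul_of_orthonormal {R ι : Type*} [CommRing R] [Fintype ι] {u v : ι → R}
    (hu : u ⬝ᵥ u = 1) (hv : v ⬝ᵥ v = 1) (huv : u ⬝ᵥ v = 0) (α β s c : R) :
    (α • Matrix.vecMulVec u u + β • Matrix.vecMulVec v v) *ᵥ (s • u + c • v) =
      (α * s) • u + (β * c) • v := by
  simp only [Matrix.add_mulVec, Matrix.smul_mulVec, Matrix.vecMulVec_mulVec, dotProduct_add,
    dotProduct_smul, hu, hv, huv, dotProduct_comm v u, smul_eq_mul, mul_one, mul_zero, add_zero,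
    zero_add, op_smul_eq_smul, mul_smul]

lemma dotp_eq_dotProduct {d : ℕ} (v w : Fin d → ℝ) : dotp v w = v ⬝ᵥ w := rfl

section Parameters

variable {ε : ℝ}

lemma gammaC_nonneg (ε : ℝ) (m : ℕ) : 0 ≤ gammaC ε m := arctan_nonneg.2 (sqrt_nonneg _)

lemma deltaC_le_pow (h0 : 0 ≤ ε) (h1 : ε < 1) (m : ℕ) : deltaC ε m ≤ ε ^ m := by
  have hden : 0 < 1 - ε ^ (4 * m + 2) := sub_pos.2 (pow_lt_one₀ h0 h1 (by omega))
  have hpow : ε ^ (4 * m + 2) ≤ ε ^ 2 := pow_le_pow_of_le_one h0 h1.le (by omega)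
  rw [deltaC, sqrt_le_left (by positivity), div_le_iff₀ hden, ← pow_mul, mul_comm m]
  nlinarith [pow_nonneg h0 (2 * m)]

lemma three_quarters_pow_le_deltaC (h0 : 0 ≤ ε) (h : ε ≤ 1 / 2) (m : ℕ) :
    3 / 4 * ε ^ m ≤ deltaC ε m := by
  have hden : 0 < 1 - ε ^ (4 * m + 2) := sub_pos.2 (pow_lt_one₀ h0 (by linarith) (by omega))
  have hden1 : 1 - ε ^ (4 * m + 2) ≤ 1 := by linarith [pow_nonneg h0 (4 * m + 2)]
  have hε2 : ε ^ 2 ≤ 1 / 4 := by nlinarith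
  have hm : 0 ≤ ε ^ (2 * m) := by positivity
  refine le_sqrt_of_sq_le ?_
  calc (3 / 4 * ε ^ m) ^ 2 ≤ ε ^ (2 * m) * (1 - ε ^ 2) := by
        rw [mul_pow, ← pow_mul, mul_comm m]; nlinarith
    _ ≤ ε ^ (2 * m) * (1 - ε ^ 2) / (1 - ε ^ (4 * m + 2)) :=
        le_div_self (mul_nonneg hm (by linarith)) hden hden1

lemma gammaC_le_pow (h0 : 0 ≤ ε) (h1 : ε < 1) (m : ℕ) : gammaC ε m ≤ ε ^ m :=
  (arctan_le_self_of_nonneg (sqrt_nonneg _)).trans (deltaC_le_pow h0 h1 m)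

lemma half_pow_le_sin_gammaC (h0 : 0 ≤ ε) (h : ε ≤ 1 / 2) (m : ℕ) :
    ε ^ m / 2 ≤ sin (gammaC ε m) := by
  have hδ := deltaC_le_pow h0 (by linarith) m
  have hδ0 : 0 ≤ deltaC ε m := sqrt_nonneg _
  have hpow : ε ^ m ≤ 1 := pow_le_one₀ h0 (by linarith)
  have hroot : √(1 + deltaC ε m ^ 2) ≤ 3 / 2 :=
    (sqrt_le_left (by norm_num)).2 (by nlinarith)
  rw [gammaC, sin_arctan, le_div_iff₀ (sqrt_pos.2 (by positivity))]
  nlinarith [three_quarters_pow_le_deltaC h0 h m, pow_nonneg h0 m]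

lemma sum_gammaC_le (h0 : 0 ≤ ε) (h1 : ε < 1) (N : ℕ) :
    ∑ m ∈ range N, gammaC ε (m + 1) ≤ ε / (1 - ε) :=
  calc ∑ m ∈ range N, gammaC ε (m + 1) ≤ ∑ m ∈ range N, ε ^ (1 + m) :=
        sum_le_sum fun m _ => (gammaC_le_pow h0 h1 (m + 1)).trans_eq (by rw [add_comm])
    _ = ∑ i ∈ Ico 1 (1 + N), ε ^ i := by rw [sum_Ico_eq_sum_range, Nat.add_sub_cancel_left]
    _ ≤ ε ^ 1 / (1 - ε) := geom_sum_Ico_le_of_lt_one h0 h1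
    _ = ε / (1 - ε) := by rw [pow_one]

lemma half_le_alphaC (h0 : 0 ≤ ε) (h1 : ε ≤ 1) (n : ℕ) : 1 / 2 ≤ alphaC ε n := by
  have : ε ^ (2 * n + 2) ≤ 1 := pow_le_one₀ h0 h1
  rw [alphaC, div_le_div_iff₀ (by norm_num) (by positivity)]
  linarith

lemma betaC_nonneg (ε : ℝ) (n : ℕ) : 0 ≤ betaC ε n := by
  have : 0 ≤ ε ^ (2 * n + 2) := (even_two_mul (n + 1)).pow_nonneg ε
  exact div_nonneg this (by linarith)

lemma betaC_le_pow (ε : ℝ) (n : ℕ) : betaC ε n ≤ ε ^ (2 * n + 2) := by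
  have : 0 ≤ ε ^ (2 * n + 2) := (even_two_mul (n + 1)).pow_nonneg ε
  exact div_le_self this (by linarith)

lemma pow_div_eight_le_alphaC_mul_sin_gammaC_mul_cos (h0 : 0 ≤ ε) (h : ε ≤ 1 / 2) (m : ℕ)
    {θ : ℝ} (hθ : |θ| ≤ 1) : ε ^ m / 8 ≤ alphaC ε m * sin (gammaC ε m) * cos θ := by
  have hα := half_le_alphaC h0 (by linarith) m
  have hsin := half_pow_le_sin_gammaC h0 h m
  have hcos := half_le_cos_of_abs_le_one hθ
  calc ε ^ m / 8 = 1 / 2 * (ε ^ m / 2) * (1 / 2) := by ring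
    _ ≤ alphaC ε m * sin (gammaC ε m) * cos θ := by
      gcongr
      exact mul_nonneg (by linarith) ((by positivity : (0 : ℝ) ≤ ε ^ m / 2).trans hsin)

lemma sixteen_mul_pow_le (h0 : 0 ≤ ε) (h : ε ≤ 1 / 4) (n : ℕ) :
    16 * ε ^ (2 * n + 4) ≤ ε ^ (n + 1) := by
  have h3 : ε ^ (n + 3) ≤ ε ^ 2 := pow_le_pow_of_le_one h0 (by linarith) (by omega)
  have hε2 : ε ^ 2 ≤ 1 / 16 := by nlinarith
  have hsplit : ε ^ (2 * n + 4) = ε ^ (n + 1) * ε ^ (n + 3) := by rw [← pow_add]; ring_nf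
  rw [hsplit]
  nlinarith [pow_nonneg h0 (n + 1)]

end Parameters

def rotFrame (θ : ℝ) : (Fin 2 → ℝ) × (Fin 2 → ℝ) := (![cos θ, sin θ], ![-sin θ, cos θ])

lemma rotFrame_orthonormal (θ : ℝ) :
    (rotFrame θ).1 ⬝ᵥ (rotFrame θ).1 = 1 ∧ (rotFrame θ).2 ⬝ᵥ (rotFrame θ).2 = 1 ∧
      (rotFrame θ).1 ⬝ᵥ (rotFrame θ).2 = 0 := by
  simp only [rotFrame, dotProduct, Fin.sum_univ_two, Matrix.cons_val_zero, Matrix.cons_val_one]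
  exact ⟨by rw [← sq, ← sq, cos_sq_add_sin_sq], by rw [neg_mul_neg, ← sq, ← sq, sin_sq_add_cos_sq],
    by ring⟩

lemma rotFrame_add (θ φ : ℝ) :
    rotFrame (θ + φ) = (cos φ • (rotFrame θ).1 + sin φ • (rotFrame θ).2,
      cos φ • (rotFrame θ).2 - sin φ • (rotFrame θ).1) := by
  ext i <;> fin_cases i <;> simp [rotFrame, cos_add, sin_add] <;> ring

lemma rotFrame_sub (θ φ : ℝ) :
    rotFrame (θ - φ) = (cos φ • (rotFrame θ).1 - sin φ • (rotFrame θ).2,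
      cos φ • (rotFrame θ).2 + sin φ • (rotFrame θ).1) := by
  simpa [sub_eq_add_neg] using rotFrame_add θ (-φ)

lemma exists_abC_eq_rotFrame (ε : ℝ) (n k : ℕ) :
    ∃ θ, |θ| ≤ ∑ m ∈ range n, gammaC ε (m + 1) ∧ abC ε n k = rotFrame θ := by
  induction n generalizing k with
  | zero => exact ⟨0, by simp, by simp [abC, rotFrame]⟩
  | succ n ih =>
    obtain ⟨θ, hθ, hframe⟩ := ih (k / 2)
    have hγ : |gammaC ε (n + 1)| = gammaC ε (n + 1) := abs_of_nonneg (gammaC_nonneg ε (n + 1))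
    rw [sum_range_succ]
    rcases Nat.mod_two_eq_zero_or_one k with hk | hk
    · refine ⟨θ - gammaC ε (n + 1), by linarith [abs_sub θ (gammaC ε (n + 1))], ?_⟩
      simp only [abC, hk, hframe, zero_ne_one, if_false, rotFrame_sub]
    · refine ⟨θ + gammaC ε (n + 1), by linarith [abs_add_le θ (gammaC ε (n + 1))], ?_⟩
      simp only [abC, hk, hframe, if_true, rotFrame_add]

lemma bC_eq_of_right_child (ε : ℝ) (n k : ℕ) :
    bC ε n k = cos (gammaC ε (n + 1)) • bC ε (n + 1) (2 * k + 1) +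
      sin (gammaC ε (n + 1)) • aC ε (n + 1) (2 * k + 1) := by
  have hk : (2 * k + 1) % 2 = 1 := by omega
  have hparent : (2 * k + 1) / 2 = k := by omega
  simp only [aC, bC, abC, hk, hparent, if_true]
  ext i
  simp only [Pi.add_apply, Pi.sub_apply, Pi.smul_apply, smul_eq_mul]
  linear_combination (-(abC ε n k).2 i) * sin_sq_add_cos_sq (gammaC ε (n + 1))

lemma dotp_aC_zero (ε : ℝ) (w : Fin 2 → ℝ) : dotp (aC ε 0 0) w = w 0 := by
  simp [dotp, aC, abC, Fin.sum_univ_two]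

lemma dotp_WC_mulVec_bC (ε : ℝ) (n k : ℕ) (v : Fin 2 → ℝ) :
    dotp v (WC ε (n + 1) (2 * k + 1) *ᵥ bC ε n k) =
      alphaC ε (n + 1) * sin (gammaC ε (n + 1)) * dotp v (aC ε (n + 1) (2 * k + 1)) +
        betaC ε (n + 1) * cos (gammaC ε (n + 1)) * dotp v (bC ε (n + 1) (2 * k + 1)) := by
  obtain ⟨θ, -, hframe⟩ := exists_abC_eq_rotFrame ε (n + 1) (2 * k + 1)
  obtain ⟨hu, hv, huv⟩ := rotFrame_orthonormal θ
  rw [bC_eq_of_right_child, add_comm (cos _ • _), WC, aC, bC, hframe,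
    mulVec_smul_add_smul_of_orthonormal hu hv huv]
  simp only [dotp_eq_dotProduct, dotProduct_add, dotProduct_smul, smul_eq_mul]

/-- **Key pointwise estimates in the blow-up.** There is `ε₀ ∈ (0,1/2]` such that for all
`ε ∈ (0,ε₀]`, `n ≥ 0` and `I = dyad n k ∈ 𝒟^n`, writing `a = a_{I₀} = (1,0)`,
`D_I = α_{n+1} (sin γ_{n+1}) ⟨a, a_{I₊}⟩` and `F_I = β_{n+1} (cos γ_{n+1}) ⟨a, b_{I₊}⟩`:
`⟨a, W_{I₊} b_I⟩ = D_I + F_I`, the angle between `a` and `a_{I₊}` is at most `ε/(1-ε)`,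
`D_I ≥ ε^{n+1}/8`, `|F_I| ≤ β_{n+1} ≤ ε^{2n+4}`, `D_I ≥ 2|F_I|`, and consequently
`⟨a, W_{I₊} b_I⟩ ≥ ε^{n+1}/16`. -/
theorem blowup_pointwise_estimates :
    ∃ ε₀ : ℝ, 0 < ε₀ ∧ ε₀ ≤ 1 / 2 ∧ ∀ ε : ℝ, 0 < ε → ε ≤ ε₀ →
      ∀ n k : ℕ, k < 2 ^ n →
        dotp (aC ε 0 0) (WC ε (n + 1) (2 * k + 1) *ᵥ bC ε n k) =
            alphaC ε (n + 1) * Real.sin (gammaC ε (n + 1)) *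
                dotp (aC ε 0 0) (aC ε (n + 1) (2 * k + 1)) +
              betaC ε (n + 1) * Real.cos (gammaC ε (n + 1)) *
                dotp (aC ε 0 0) (bC ε (n + 1) (2 * k + 1)) ∧
        Real.arccos (dotp (aC ε 0 0) (aC ε (n + 1) (2 * k + 1))) ≤ ε / (1 - ε) ∧
        ε ^ (n + 1) / 8 ≤
          alphaC ε (n + 1) * Real.sin (gammaC ε (n + 1)) *
            dotp (aC ε 0 0) (aC ε (n + 1) (2 * k + 1)) ∧
        |betaC ε (n + 1) * Real.cos (gammaC ε (n + 1)) *
            dotp (aC ε 0 0) (bC ε (n + 1) (2 * k + 1))| ≤ betaC ε (n + 1) ∧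
        betaC ε (n + 1) ≤ ε ^ (2 * n + 4) ∧
        2 * |betaC ε (n + 1) * Real.cos (gammaC ε (n + 1)) *
            dotp (aC ε 0 0) (bC ε (n + 1) (2 * k + 1))| ≤
          alphaC ε (n + 1) * Real.sin (gammaC ε (n + 1)) *
            dotp (aC ε 0 0) (aC ε (n + 1) (2 * k + 1)) ∧
        ε ^ (n + 1) / 16 ≤
          dotp (aC ε 0 0) (WC ε (n + 1) (2 * k + 1) *ᵥ bC ε n k) := by
  refine ⟨1 / 4, by norm_num, by norm_num, fun ε hε0 hε n k _ => ?_⟩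
  obtain ⟨θ, hθsum, hframe⟩ := exists_abC_eq_rotFrame ε (n + 1) (2 * k + 1)
  have hθ : |θ| ≤ ε / (1 - ε) := hθsum.trans (sum_gammaC_le hε0.le (by linarith) _)
  have hθ1 : |θ| ≤ 1 := hθ.trans ((div_le_one (by linarith)).2 (by linarith))
  have ha : dotp (aC ε 0 0) (aC ε (n + 1) (2 * k + 1)) = cos θ := by
    rw [dotp_aC_zero, aC, hframe]; rfl
  have hb : dotp (aC ε 0 0) (bC ε (n + 1) (2 * k + 1)) = -sin θ := by
    rw [dotp_aC_zero, bC, hframe]; rfl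
  rw [dotp_WC_mulVec_bC, ha, hb]
  have hD := pow_div_eight_le_alphaC_mul_sin_gammaC_mul_cos hε0.le (by linarith) (n + 1) hθ1
  set F := betaC ε (n + 1) * cos (gammaC ε (n + 1)) * -sin θ
  have hF : |F| ≤ betaC ε (n + 1) :=
    abs_mul_cos_mul_le (betaC_nonneg _ _) (by rw [abs_neg]; exact abs_sin_le_one θ)
  have hβ : betaC ε (n + 1) ≤ ε ^ (2 * n + 4) := (betaC_le_pow ε (n + 1)).trans_eq (by ring_nf)
  have hsmall := sixteen_mul_pow_le hε0.le hε n
  refine ⟨rfl, ?_, hD, hF, hβ, by linarith, by linarith [neg_abs_le F]⟩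
  rw [← cos_abs, arccos_cos (abs_nonneg θ) (by linarith [pi_gt_three])]
  exact hθ
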